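/- arXiv:0706.1419 — 4 statements merged into one kernel-verified Lean document; each statement's English description precedes it below -/
import Mathlib

section
/- The set of symmetric Borel probability measures on ℝ whose topological support is all of ℝ and which are concentrated on a set of Lebesgue measure zero (i.e., give full mass to some Borel set of Lebesgue measure zero) is dense in the set of symmetric Borel probability measures on ℝ for the topology of weak convergence. -/
/-!
Round `ν` toward zero onto the grid `(1/n)ℤ`. Rounding toward zero is odd and converges
pointwise to the identity, so the pushforwards of `ν` are symmetric, live on a countable set, and
converge weakly to `ν`. Mixing in, with weight `tₙ → 0`, a fixed symmetric atomic measure that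
charges every rational adds full support and keeps both symmetry and countable (hence
Lebesgue-null) support.
-/

open MeasureTheory Set Filter Topology

noncomputable section

/-- A probability measure on `ℝ` is symmetric if it is invariant under `t ↦ -t`. -/
def IsSymmetricPM (ν : ProbabilityMeasure ℝ) : Prop :=
  Measure.map (fun t : ℝ => -t) (ν : Measure ℝ) = (ν : Measure ℝ)

open scoped ENNReal NNReal unitInterval BoundedContinuousFunction

namespace MeasureTheory.ProbabilityMeasure

variable {Ω : Type*} [MeasurableSpace Ω]

def mix (t : I) (μ ν : ProbabilityMeasure Ω) : ProbabilityMeasure Ω :=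
  ⟨unitInterval.toNNReal (σ t) • (μ : Measure Ω) + unitInterval.toNNReal t • (ν : Measure Ω),
    ⟨by simp [← ENNReal.coe_add, unitInterval.toNNReal_symm_add_toNNReal]⟩⟩

lemma mix_apply (t : I) (μ ν : ProbabilityMeasure Ω) (s : Set Ω) :
    (μ.mix t ν : Measure Ω) s =
      unitInterval.toNNReal (σ t) * (μ : Measure Ω) s +
        unitInterval.toNNReal t * (ν : Measure Ω) s :=
  rfl

@[simp] lemma mix_zero (μ ν : ProbabilityMeasure Ω) : μ.mix 0 ν = μ := by
  ext1; simp [mix]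

lemma mix_apply_pos {t : I} (ht : 0 < t) (μ : ProbabilityMeasure Ω) {ν : ProbabilityMeasure Ω}
    {s : Set Ω} (hs : 0 < (ν : Measure Ω) s) : 0 < (μ.mix t ν : Measure Ω) s := by
  have ht' : (unitInterval.toNNReal t : ℝ≥0∞) ≠ 0 := by
    simpa [← NNReal.coe_ne_zero] using ht.ne'
  exact (ENNReal.mul_pos ht' hs.ne').trans_le le_add_self

lemma mix_apply_eq_one (t : I) {μ ν : ProbabilityMeasure Ω} {s : Set Ω}
    (hμ : (μ : Measure Ω) s = 1) (hν : (ν : Measure Ω) s = 1) : (μ.mix t ν : Measure Ω) s = 1 := by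
  simp [mix_apply, hμ, hν, ← ENNReal.coe_add, unitInterval.toNNReal_symm_add_toNNReal]

lemma map_mix {Ω' : Type*} [MeasurableSpace Ω'] {f : Ω → Ω'} (hf : Measurable f) (t : I)
    (μ ν : ProbabilityMeasure Ω) :
    (μ.mix t ν : Measure Ω).map f =
      ((μ.map hf.aemeasurable).mix t (ν.map hf.aemeasurable) : Measure Ω') := by
  simp [mix, Measure.map_add _ _ hf, Measure.map_smul]

lemma map_apply_range {Ω' : Type*} [MeasurableSpace Ω'] (ν : ProbabilityMeasure Ω)
    {f : Ω → Ω'} (hf : Measurable f) (hrange : MeasurableSet (range f)) :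
    (ν.map hf.aemeasurable : Measure Ω') (range f) = 1 := by
  rw [toMeasure_map, Measure.map_apply hf hrange, preimage_range, measure_univ]

variable [TopologicalSpace Ω] [OpensMeasurableSpace Ω]

lemma integral_mix (t : I) (μ ν : ProbabilityMeasure Ω) (f : Ω →ᵇ ℝ) :
    ∫ x, f x ∂(μ.mix t ν : Measure Ω) =
      (1 - (t : ℝ)) * ∫ x, f x ∂(μ : Measure Ω) + t * ∫ x, f x ∂(ν : Measure Ω) := by
  rw [mix, ProbabilityMeasure.coe_mk, integral_add_measure, integral_smul_nnreal_measure,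
    integral_smul_nnreal_measure]
  · simp [NNReal.smul_def]
  · exact (f.integrable _).smul_measure_nnreal
  · exact (f.integrable _).smul_measure_nnreal

lemma _root_.Filter.Tendsto.probabilityMeasure_mix {ι : Type*} {l : Filter ι} {t : ι → I} {t₀ : I}
    {μ ν : ι → ProbabilityMeasure Ω} {μ₀ ν₀ : ProbabilityMeasure Ω} (hμ : Tendsto μ l (𝓝 μ₀))
    (ht : Tendsto t l (𝓝 t₀)) (hν : Tendsto ν l (𝓝 ν₀)) :
    Tendsto (fun i => (μ i).mix (t i) (ν i)) l (𝓝 (μ₀.mix t₀ ν₀)) := by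
  rw [tendsto_iff_forall_integral_tendsto] at hμ hν ⊢
  intro f
  simp only [integral_mix]
  have ht' : Tendsto (fun i => (t i : ℝ)) l (𝓝 t₀) := (continuous_subtype_val.tendsto _).comp ht
  exact ((tendsto_const_nhds.sub ht').mul (hμ f)).add (ht'.mul (hν f))

lemma tendsto_map_of_tendsto {ι : Type*} {l : Filter ι} [l.IsCountablyGenerated]
    (ν : ProbabilityMeasure Ω) {f : ι → Ω → Ω} (hf : ∀ i, Measurable (f i))
    (hlim : ∀ x, Tendsto (fun i => f i x) l (𝓝 x)) :
    Tendsto (fun i => ν.map (hf i).aemeasurable) l (𝓝 ν) := by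
  have h := (tendstoInDistribution_of_ae_tendsto (μ' := (ν : Measure Ω))
    (fun i => (hf i).aemeasurable) aemeasurable_id (ae_of_all _ hlim)).tendsto
  simp only [Measure.map_id] at h
  exact h

end MeasureTheory.ProbabilityMeasure

open ProbabilityMeasure

lemma IsSymmetricPM.mix {μ ν : ProbabilityMeasure ℝ} (hμ : IsSymmetricPM μ) (hν : IsSymmetricPM ν)
    (t : I) : IsSymmetricPM (μ.mix t ν) := by
  rw [IsSymmetricPM, map_mix measurable_neg]
  congr 2 <;> exact Subtype.ext ‹_›

lemma IsSymmetricPM.map_of_odd {ν : ProbabilityMeasure ℝ} (hν : IsSymmetricPM ν) {f : ℝ → ℝ}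
    (hf : Measurable f) (hodd : ∀ x, f (-x) = -f x) : IsSymmetricPM (ν.map hf.aemeasurable) := by
  have hcomm : (fun t => -t) ∘ f = f ∘ fun t => -t := funext fun x => (hodd x).symm
  rw [IsSymmetricPM, toMeasure_map, Measure.map_map measurable_neg hf, hcomm,
    ← Measure.map_map hf measurable_neg, hν]

section RoundTowardZero

variable {K : Type*} [Field K] [LinearOrder K] [IsStrictOrderedRing K] [FloorRing K]

def roundTowardZero (x : K) : ℤ := if 0 ≤ x then ⌊x⌋ else ⌈x⌉

lemma roundTowardZero_neg (x : K) : roundTowardZero (-x) = -roundTowardZero x := by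
  rcases lt_trichotomy x 0 with h | rfl | h
  · rw [roundTowardZero, roundTowardZero, if_pos (neg_nonneg.2 h.le), if_neg h.not_ge,
      Int.floor_neg]
  · simp [roundTowardZero]
  · rw [roundTowardZero, roundTowardZero, if_neg (by simpa using h), if_pos h.le, Int.ceil_neg]

lemma abs_roundTowardZero_sub_lt_one (x : K) : |(roundTowardZero x : K) - x| < 1 := by
  rw [roundTowardZero]
  split_ifs
  · rw [abs_sub_comm, ← Int.fract, abs_of_nonneg (Int.fract_nonneg x)]; exact Int.fract_lt_one x
  · rw [abs_of_nonneg (sub_nonneg.2 (Int.le_ceil x))]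
    linarith [Int.ceil_lt_add_one x]

end RoundTowardZero

lemma measurable_roundTowardZero : Measurable (roundTowardZero : ℝ → ℤ) :=
  Measurable.ite measurableSet_Ici Int.measurable_floor Int.measurable_ceil

def truncToGrid (n : ℕ) (x : ℝ) : ℝ := roundTowardZero (n * x) / n

lemma measurable_truncToGrid (n : ℕ) : Measurable (truncToGrid n) :=
  (measurable_from_top.comp (measurable_roundTowardZero.comp (measurable_const_mul _))).div_const _

lemma truncToGrid_neg (n : ℕ) (x : ℝ) : truncToGrid n (-x) = -truncToGrid n x := by
  simp [truncToGrid, roundTowardZero_neg, neg_div]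

lemma tendsto_truncToGrid (x : ℝ) : Tendsto (fun n => truncToGrid n x) atTop (𝓝 x) := by
  rw [tendsto_iff_norm_sub_tendsto_zero]
  refine squeeze_zero' (Eventually.of_forall fun n => norm_nonneg _) ?_
    tendsto_one_div_atTop_nhds_zero_nat
  filter_upwards [eventually_gt_atTop 0] with n hn
  have hn' : (0 : ℝ) < n := Nat.cast_pos.2 hn
  have hdiff : truncToGrid n x - x = (roundTowardZero (n * x) - n * x) / n := by
    rw [truncToGrid, sub_div, mul_div_cancel_left₀ _ hn'.ne']
  rw [hdiff, norm_div, Real.norm_natCast, Real.norm_eq_abs]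
  exact div_le_div_of_nonneg_right (abs_roundTowardZero_sub_lt_one _).le hn'.le

lemma countable_range_truncToGrid (n : ℕ) : (range (truncToGrid n)).Countable :=
  (countable_range fun k : ℤ => (k : ℝ) / n).mono (by
    rintro _ ⟨x, rfl⟩; exact ⟨roundTowardZero (n * x), rfl⟩)

/-- Mass `2⁻¹ ^ (n + 2)` at each of `x n` and `-x n`; these add up to `1`. -/
def symmAtomicMeasure (x : ℕ → ℝ) : Measure ℝ :=
  Measure.sum fun n => (2⁻¹ : ℝ≥0∞) ^ (n + 2) • (Measure.dirac (x n) + Measure.dirac (-x n))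

lemma symmAtomicMeasure_apply_of_forall_mem (x : ℕ → ℝ) {s : Set ℝ} (hs : MeasurableSet s)
    (hx : ∀ n, x n ∈ s ∧ -x n ∈ s) : symmAtomicMeasure x s = 1 := by
  have hterm : ∀ n, (2⁻¹ : ℝ≥0∞) ^ (n + 2) * (Measure.dirac (x n) s + Measure.dirac (-x n) s) =
      2⁻¹ ^ (n + 1) := fun n => by
    rw [Measure.dirac_apply_of_mem (hx n).1, Measure.dirac_apply_of_mem (hx n).2,
      one_add_one_eq_two, pow_succ, mul_assoc,
      ENNReal.inv_mul_cancel two_ne_zero ENNReal.ofNat_ne_top, mul_one]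
  simp only [symmAtomicMeasure, Measure.sum_apply _ hs, Measure.smul_apply, Measure.add_apply,
    smul_eq_mul, hterm, ENNReal.tsum_geometric_add_one, ENNReal.one_sub_inv_two, inv_inv,
    ENNReal.inv_mul_cancel two_ne_zero ENNReal.ofNat_ne_top]

instance (x : ℕ → ℝ) : IsProbabilityMeasure (symmAtomicMeasure x) :=
  ⟨symmAtomicMeasure_apply_of_forall_mem x MeasurableSet.univ fun _ => ⟨mem_univ _, mem_univ _⟩⟩

lemma symmAtomicMeasure_apply_pos (x : ℕ → ℝ) {s : Set ℝ} {n : ℕ} (hn : x n ∈ s) :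
    0 < symmAtomicMeasure x s := by
  refine lt_of_lt_of_le ?_ (Measure.le_sum _ n s)
  rw [Measure.smul_apply, Measure.add_apply, Measure.dirac_apply_of_mem hn, smul_eq_mul]
  exact ENNReal.mul_pos (by simp) (by simp)

lemma map_neg_symmAtomicMeasure (x : ℕ → ℝ) :
    (symmAtomicMeasure x).map (fun t => -t) = symmAtomicMeasure x := by
  simp only [symmAtomicMeasure, Measure.map_sum measurable_neg.aemeasurable, Measure.map_smul,
    Measure.map_add _ _ measurable_neg, Measure.map_dirac' measurable_neg, neg_neg, add_comm]

lemma exists_isSymmetricPM_rat_fullSupport :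
    ∃ ρ : ProbabilityMeasure ℝ, IsSymmetricPM ρ ∧
      (∀ x : ℝ, ∀ ε > 0, 0 < (ρ : Measure ℝ) (Ioo (x - ε) (x + ε))) ∧
      (ρ : Measure ℝ) (range ((↑) : ℚ → ℝ)) = 1 := by
  set q : ℕ → ℝ := fun n => (Denumerable.ofNat ℚ n : ℝ)
  refine ⟨⟨symmAtomicMeasure q, inferInstance⟩, map_neg_symmAtomicMeasure q, fun x ε hε => ?_,
    symmAtomicMeasure_apply_of_forall_mem q (countable_range _).measurableSet
      fun n => ⟨⟨_, rfl⟩, ⟨-Denumerable.ofNat ℚ n, Rat.cast_neg _⟩⟩⟩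
  obtain ⟨r, hr⟩ := exists_rat_btwn (show x - ε < x + ε by linarith)
  obtain ⟨n, rfl⟩ := (Denumerable.eqv ℚ).symm.surjective r
  exact symmAtomicMeasure_apply_pos q hr

/-- The set of symmetric Borel probability measures on `ℝ` with full
topological support which are concentrated on a Lebesgue-null set is dense, for the topology
of weak convergence, in the set of symmetric Borel probability measures on `ℝ`. -/
theorem stmt2 :
    ∀ ν : ProbabilityMeasure ℝ, IsSymmetricPM ν →
      ν ∈ closure {ρ : ProbabilityMeasure ℝ | IsSymmetricPM ρ ∧
        (∀ x : ℝ, ∀ ε > 0, 0 < (ρ : Measure ℝ) (Set.Ioo (x - ε) (x + ε))) ∧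
        (∃ N : Set ℝ, MeasurableSet N ∧ volume N = 0 ∧ (ρ : Measure ℝ) N = 1)} := by
  intro ν hν
  obtain ⟨ρ, hρ_symm, hρ_supp, hρ_rat⟩ := exists_isSymmetricPM_rat_fullSupport
  obtain ⟨t, -, ht_mem, ht_lim⟩ :=
    exists_seq_strictAnti_tendsto' (show (0 : I) < 1 from zero_lt_one)
  set μ : ℕ → ProbabilityMeasure ℝ := fun n => ν.map (measurable_truncToGrid n).aemeasurable
  refine mem_closure_of_tendsto (f := fun n => (μ n).mix (t n) ρ) (b := atTop) ?_
    (Eventually.of_forall fun n => ⟨?_, ?_, ?_⟩)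
  · simpa using (ν.tendsto_map_of_tendsto measurable_truncToGrid
      tendsto_truncToGrid).probabilityMeasure_mix ht_lim tendsto_const_nhds
  · exact (hν.map_of_odd (measurable_truncToGrid n) (truncToGrid_neg n)).mix hρ_symm _
  · exact fun x ε hε => mix_apply_pos (ht_mem n).1 _ (hρ_supp x ε hε)
  · have hN : (range (truncToGrid n) ∪ range ((↑) : ℚ → ℝ)).Countable :=
      (countable_range_truncToGrid n).union (countable_range _)
    have hμ_grid : (μ n : Measure ℝ) (range (truncToGrid n)) = 1 :=
      ν.map_apply_range (measurable_truncToGrid n) (countable_range_truncToGrid n).measurableSet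
    refine ⟨_, hN.measurableSet, hN.measure_zero _, mix_apply_eq_one _ ?_ ?_⟩
    · exact one_le_prob_iff.1 (hμ_grid ▸ measure_mono subset_union_left)
    · exact one_le_prob_iff.1 (hρ_rat ▸ measure_mono subset_union_right)

end
end

section
/- Let λ ∈ (0,1) and let μ be a symmetric Borel probability measure on ℝ. Then for every z ∈ ℂ∖[0,∞), H_μ(z) ∈ ℂ∖[0,∞); moreover, if Re z < 0 and Im z > 0 then Re H_μ(z) < 0. -/
open MeasureTheory Complex Set Filter Topology

noncomputable section

/-- The nonnegative real axis, viewed as a subset of `ℂ`. -/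
def posAxis : Set ℂ := {z : ℂ | z.im = 0 ∧ 0 ≤ z.re}

/-- `M_μ(z) = ∫ z t² / (1 - z t²) dμ(t)`. -/
def Mt (μ : Measure ℝ) (z : ℂ) : ℂ := ∫ t : ℝ, z * (t : ℂ) ^ 2 / (1 - z * (t : ℂ) ^ 2) ∂μ

/-- `H_μ(z) = z (1 + M_μ(z)) (1 + λ M_μ(z))`. -/
def Ht (l : ℝ) (μ : Measure ℝ) (z : ℂ) : ℂ :=
  z * (1 + Mt μ z) * (1 + (l : ℂ) * Mt μ z)

/-!
Writing `M = M_μ(z)`, one has `1 + M = ∫ (1 - z t²)⁻¹ dμ`, so for `Im z > 0` both `Im M ≥ 0` and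
`Im (z (1 + M)) > 0`. Then `b = 1 + λ M` lies in the closed upper half-plane and is nonzero,
because `z b = (1 - λ) z + λ z (1 + M)` lies in the open one; a product of a point of the open
upper half-plane with a nonzero point of the closed one never lies on `[0, ∞)`. The lower
half-plane follows by conjugation, and on the negative real axis everything is real, with
`1 + M > 0`.
-/

open ComplexConjugate

lemma integral_pos_of_forall_pos {α : Type*} [MeasurableSpace α] {μ : Measure α} [NeZero μ]
    {f : α → ℝ} (hf : ∀ x, 0 < f x) (hfi : Integrable f μ) : 0 < ∫ x, f x ∂μ := by
  rw [integral_pos_iff_support_of_nonneg (fun x => (hf x).le) hfi,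
    Function.support_eq_univ fun x => (hf x).ne', pos_iff_ne_zero]
  exact (Measure.measure_univ_ne_zero).2 (NeZero.ne μ)

lemma conj_mem_posAxis_iff {z : ℂ} : conj z ∈ posAxis ↔ z ∈ posAxis := by
  simp [posAxis]

lemma notMem_posAxis_of_im_pos {z : ℂ} (hz : 0 < z.im) : z ∉ posAxis :=
  fun h => hz.ne' h.1

lemma notMem_posAxis_of_re_neg {z : ℂ} (hz : z.re < 0) : z ∉ posAxis :=
  fun h => hz.not_ge h.2

lemma mul_notMem_posAxis {a b : ℂ} (ha : 0 < a.im) (hb : 0 ≤ b.im) (hb0 : b ≠ 0) :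
    a * b ∉ posAxis := by
  rintro ⟨him, hre⟩
  rw [mul_im] at him
  rw [mul_re] at hre
  have hnormSq : 0 < b.re ^ 2 + b.im ^ 2 := by
    simpa [normSq_apply, sq] using normSq_pos.2 hb0
  have key : a.im * (b.re ^ 2 + b.im ^ 2) = -(b.im * (a.re * b.re - a.im * b.im)) := by
    linear_combination b.re * him
  nlinarith [mul_pos ha hnormSq, mul_nonneg hb hre]

section UpperHalfPlane

variable {l : ℝ} (hl : l ∈ Ioo (0 : ℝ) 1) {z m : ℂ} (hz : 0 < z.im) (hm : 0 ≤ m.im)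
  (hzm : 0 < (z * (1 + m)).im)
include hl hz hzm

lemma im_mul_one_add_mul_pos : 0 < (z * (1 + l * m)).im := by
  have h : z * (1 + l * m) = (1 - l) * z + l * (z * (1 + m)) := by ring
  rw [h, add_im, show (1 : ℂ) - l = ((1 - l : ℝ) : ℂ) by push_cast; rfl, im_ofReal_mul,
    im_ofReal_mul]
  nlinarith [mul_pos (sub_pos.2 hl.2) hz, mul_pos hl.1 hzm]

include hm

lemma mul_one_add_mul_notMem_posAxis : z * (1 + m) * (1 + l * m) ∉ posAxis := by
  refine mul_notMem_posAxis hzm ?_ fun h => ?_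
  · simpa using mul_nonneg hl.1.le hm
  · simpa [h] using im_mul_one_add_mul_pos hl hz hzm

lemma re_mul_one_add_mul_neg (hre : z.re < 0) : (z * (1 + m) * (1 + l * m)).re < 0 := by
  set a := z * (1 + m)
  set b := 1 + l * m
  have hb : 0 ≤ b.im := by simpa [b] using mul_nonneg hl.1.le hm
  have hzb := im_mul_one_add_mul_pos hl hz hzm
  have ha : a.re < 0 := by
    have : z.re * a.im - z.im * a.re = (z.re ^ 2 + z.im ^ 2) * m.im := by
      simp only [a, mul_re, mul_im, add_re, add_im, one_re, one_im]; ring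
    nlinarith [mul_nonneg (add_nonneg (sq_nonneg z.re) (sq_nonneg z.im)) hm]
  have hb' : 0 < b.re := by
    rw [mul_im] at hzb
    nlinarith
  rw [mul_re]
  nlinarith [mul_nonneg hzm.le hb]

end UpperHalfPlane

lemma re_mul_one_add_mul_neg_of_real {l : ℝ} (hl : l ∈ Ioo (0 : ℝ) 1) {z m : ℂ}
    (hzi : z.im = 0) (hzr : z.re < 0) (hmi : m.im = 0) (hmr : 0 < 1 + m.re) :
    (z * (1 + m) * (1 + l * m)).re < 0 := by
  have hb : 0 < 1 + l * m.re := by nlinarith [hl.1, hl.2]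
  simp only [mul_re, mul_im, add_re, add_im, one_re, one_im, ofReal_re, ofReal_im, hzi, hmi]
  nlinarith [mul_pos hmr hb]

section Integrand

variable {z : ℂ}

lemma re_one_sub_mul_sq (t : ℝ) : (1 - z * (t : ℂ) ^ 2).re = 1 - z.re * t ^ 2 := by
  simp [← ofReal_pow]

lemma im_one_sub_mul_sq (t : ℝ) : (1 - z * (t : ℂ) ^ 2).im = -(z.im * t ^ 2) := by
  simp [← ofReal_pow]

lemma one_sub_mul_sq_ne_zero (hz : z ∉ posAxis) (t : ℝ) : 1 - z * (t : ℂ) ^ 2 ≠ 0 := by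
  intro h
  have hre := re_one_sub_mul_sq (z := z) t
  have him := im_one_sub_mul_sq (z := z) t
  rw [h, zero_re] at hre
  rw [h, zero_im] at him
  have ht : t ^ 2 ≠ 0 := fun h0 => by simp [h0] at hre
  have ht' : 0 < t ^ 2 := (sq_nonneg t).lt_of_ne' ht
  exact hz ⟨by nlinarith, by nlinarith⟩

lemma exists_norm_inv_one_sub_mul_sq_le (hz : z ∉ posAxis) :
    ∃ C, ∀ t : ℝ, ‖(1 - z * (t : ℂ) ^ 2)⁻¹‖ ≤ C := by
  by_cases hre : z.re ≤ 0
  · refine ⟨1, fun t => ?_⟩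
    have : 1 ≤ ‖1 - z * (t : ℂ) ^ 2‖ := by
      refine le_trans ?_ (re_le_norm _)
      rw [re_one_sub_mul_sq]
      nlinarith [sq_nonneg t]
    rw [norm_inv]
    exact inv_le_one_of_one_le₀ this
  · have him : z.im ≠ 0 := fun h => hz ⟨h, (not_le.1 hre).le⟩
    refine ⟨‖z‖ / |z.im|, fun t => ?_⟩
    have hD := one_sub_mul_sq_ne_zero hz t
    -- `conj z * (1 - z t²) = conj z - ‖z‖² t²`, whose imaginary part is `-z.im`
    have key : |z.im| ≤ ‖z‖ * ‖1 - z * (t : ℂ) ^ 2‖ := by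
      have h := abs_im_le_norm (conj z * (1 - z * (t : ℂ) ^ 2))
      rwa [norm_mul, norm_conj, mul_im, conj_re, conj_im, re_one_sub_mul_sq,
        im_one_sub_mul_sq, show z.re * -(z.im * t ^ 2) + -z.im * (1 - z.re * t ^ 2) = -z.im by
          ring, abs_neg] at h
    rw [norm_inv, le_div_iff₀ (abs_pos.2 him), inv_mul_le_iff₀ (norm_pos_iff.2 hD), mul_comm]
    exact key

lemma integrable_inv_one_sub_mul_sq (hz : z ∉ posAxis) (μ : Measure ℝ) [IsFiniteMeasure μ] :
    Integrable (fun t : ℝ => (1 - z * (t : ℂ) ^ 2)⁻¹) μ := by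
  obtain ⟨C, hC⟩ := exists_norm_inv_one_sub_mul_sq_le hz
  refine Integrable.of_bound ?_ C (ae_of_all _ hC)
  exact (Continuous.inv₀ (by fun_prop) (one_sub_mul_sq_ne_zero hz)).aestronglyMeasurable

lemma im_inv_one_sub_mul_sq (t : ℝ) :
    ((1 - z * (t : ℂ) ^ 2)⁻¹).im = z.im * t ^ 2 / normSq (1 - z * (t : ℂ) ^ 2) := by
  rw [inv_im, im_one_sub_mul_sq, neg_neg]

lemma im_mul_inv_one_sub_mul_sq (t : ℝ) :
    (z * (1 - z * (t : ℂ) ^ 2)⁻¹).im = z.im / normSq (1 - z * (t : ℂ) ^ 2) := by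
  rw [mul_im, inv_re, inv_im, re_one_sub_mul_sq, im_one_sub_mul_sq]
  ring

lemma re_inv_one_sub_mul_sq_pos (hz : z.re < 0) (t : ℝ) : 0 < ((1 - z * (t : ℂ) ^ 2)⁻¹).re := by
  rw [inv_re, re_one_sub_mul_sq]
  exact div_pos (by nlinarith [sq_nonneg t])
    (normSq_pos.2 (one_sub_mul_sq_ne_zero (notMem_posAxis_of_re_neg hz) t))

end Integrand

section Transform

variable (μ : Measure ℝ) [IsProbabilityMeasure μ] {z : ℂ}

lemma one_add_Mt (hz : z ∉ posAxis) : 1 + Mt μ z = ∫ t : ℝ, (1 - z * (t : ℂ) ^ 2)⁻¹ ∂μ := by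
  have h : Mt μ z = ∫ t : ℝ, ((1 - z * (t : ℂ) ^ 2)⁻¹ - 1) ∂μ :=
    integral_congr_ae <| ae_of_all _ fun t => by
      field_simp [one_sub_mul_sq_ne_zero hz t]
      ring
  rw [h, integral_sub (integrable_inv_one_sub_mul_sq hz μ) (integrable_const 1), integral_const,
    probReal_univ, one_smul]
  ring

lemma im_Mt_nonneg (hz : 0 < z.im) : 0 ≤ (Mt μ z).im := by
  have hint := integrable_inv_one_sub_mul_sq (notMem_posAxis_of_im_pos hz) μ
  have h := congrArg im (one_add_Mt μ (notMem_posAxis_of_im_pos hz))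
  rw [add_im, one_im, zero_add] at h
  rw [h, ← RCLike.im_eq_complex_im, ← integral_im hint]
  exact integral_nonneg fun t => by
    rw [RCLike.im_eq_complex_im, im_inv_one_sub_mul_sq]
    exact div_nonneg (mul_nonneg hz.le (sq_nonneg t)) (normSq_nonneg _)

lemma im_mul_one_add_Mt_pos (hz : 0 < z.im) : 0 < (z * (1 + Mt μ z)).im := by
  have hz' := notMem_posAxis_of_im_pos hz
  have hint := (integrable_inv_one_sub_mul_sq hz' μ).const_mul z
  rw [one_add_Mt μ hz', ← integral_const_mul, ← RCLike.im_eq_complex_im, ← integral_im hint]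
  refine integral_pos_of_forall_pos (fun t => ?_) hint.im
  rw [RCLike.im_eq_complex_im, im_mul_inv_one_sub_mul_sq]
  exact div_pos hz (normSq_pos.2 (one_sub_mul_sq_ne_zero hz' t))

lemma re_one_add_Mt_pos (hz : z.re < 0) : 0 < 1 + (Mt μ z).re := by
  have hz' := notMem_posAxis_of_re_neg hz
  have hint := integrable_inv_one_sub_mul_sq hz' μ
  have h := congrArg re (one_add_Mt μ hz')
  rw [add_re, one_re] at h
  rw [h, ← RCLike.re_eq_complex_re, ← integral_re hint]
  exact integral_pos_of_forall_pos (re_inv_one_sub_mul_sq_pos hz) hint.re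

end Transform

lemma Mt_conj (μ : Measure ℝ) (z : ℂ) : Mt μ (conj z) = conj (Mt μ z) := by
  rw [Mt, Mt, ← integral_conj]
  simp

lemma Ht_conj (l : ℝ) (μ : Measure ℝ) (z : ℂ) : Ht l μ (conj z) = conj (Ht l μ z) := by
  simp [Ht, Mt_conj]

theorem stmt3_general (l : ℝ) (hl : l ∈ Set.Ioo (0 : ℝ) 1) (μ : Measure ℝ) [IsProbabilityMeasure μ] :
    (∀ z : ℂ, z ∉ posAxis → Ht l μ z ∉ posAxis) ∧
    (∀ z : ℂ, z.re < 0 → 0 < z.im → (Ht l μ z).re < 0) := by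
  have upper_half {z : ℂ} (hz : 0 < z.im) := mul_one_add_mul_notMem_posAxis hl hz
    (im_Mt_nonneg μ hz) (im_mul_one_add_Mt_pos μ hz)
  refine ⟨fun z hz => ?_, fun z hre hz => re_mul_one_add_mul_neg hl hz
    (im_Mt_nonneg μ hz) (im_mul_one_add_Mt_pos μ hz) hre⟩
  rcases lt_trichotomy z.im 0 with hneg | hzero | hpos
  · rw [← conj_conj z, Ht_conj, conj_mem_posAxis_iff]
    exact upper_half (by simpa using hneg)
  · have hre : z.re < 0 := not_le.1 fun h => hz ⟨hzero, h⟩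
    have hMt : (Mt μ z).im = 0 := by
      rw [← conj_eq_iff_im, ← Mt_conj, conj_eq_iff_im.2 hzero]
    exact notMem_posAxis_of_re_neg
      (re_mul_one_add_mul_neg_of_real hl hzero hre hMt (re_one_add_Mt_pos μ hre))
  · exact upper_half hpos

/-- For `λ ∈ (0,1)` and a symmetric probability measure `μ` on `ℝ`,
`H_μ` maps `ℂ∖[0,∞)` into itself, and maps the second quadrant into the open left
half-plane. -/
theorem stmt3 (l : ℝ) (hl : l ∈ Set.Ioo (0 : ℝ) 1) (μ : Measure ℝ) [IsProbabilityMeasure μ]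
    (hsym : Measure.map (fun t : ℝ => -t) μ = μ) :
    (∀ z : ℂ, z ∉ posAxis → Ht l μ z ∉ posAxis) ∧
    (∀ z : ℂ, z.re < 0 → 0 < z.im → (Ht l μ z).re < 0) :=
  stmt3_general l hl μ

end
end

section
/- Let μ be a Borel probability measure on ℝ that is not a Dirac mass, and let φ : ℂ⁺ → ℂ⁻ ∪ ℝ be analytic with z = F_μ(z) + φ(F_μ(z)) for all z ∈ ℂ⁺. Assume that the restriction of F_μ to ℂ⁺ extends continuously to ℝ with finite values, and that every nontangential limit of φ that exists at a point of ℝ belongs to ℂ⁻. Then the boundary value F_μ(x) belongs to ℂ⁺ for every x ∈ ℝ. -/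
/-!
Suppose `F_μ(x) = c` were real. As `z → x` inside `ℂ⁺`, `w = F_μ(z) → c`, and `f = -φ`, a
holomorphic map of `ℂ⁺` into its closure, satisfies `f(w) = w - z → c - x` with `Im f(w) ≤ Im w`.
The Schwarz–Pick lemma for `ℂ⁺`, written as
`Im p · Im q · |f p - conj (f q)|² ≤ Im f(p) · Im f(q) · |p - conj q|²`, taken at `q = w` and
passed to the limit gives the Julia-type inequality `Im p · |f p - (c - x)|² ≤ Im f(p) · |p - c|²`.
In a Stolz angle of aperture `α` at `c` it forces `|f p - (c - x)| ≤ (α² + 1) Im p`, so `φ` has the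
real nontangential limit `x - c` at `c`, which the hypothesis excludes.
-/

open MeasureTheory Complex Set Filter Topology

noncomputable section

/-- The upper half-plane. -/
def UHP : Set ℂ := {z : ℂ | 0 < z.im}

/-- The Cauchy transform of a measure on `ℝ`. -/
def cauchyG (ν : Measure ℝ) (z : ℂ) : ℂ := ∫ t : ℝ, (z - (t : ℂ))⁻¹ ∂ν

/-- The reciprocal Cauchy transform. -/
def cauchyF (ν : Measure ℝ) (z : ℂ) : ℂ := (cauchyG ν z)⁻¹

/-- The Stolz angle at `x ∈ ℝ` with aperture parameter `α`. -/
def stolz (x α : ℝ) : Set ℂ := {z : ℂ | 0 < z.im ∧ |z.re - x| ≤ α * z.im}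

/-- `f` has nontangential limit `l` at the real point `x`. -/
def HasNTLimitAt (f : ℂ → ℂ) (x : ℝ) (l : ℂ) : Prop :=
  ∀ α > (0 : ℝ), Tendsto f (nhdsWithin (x : ℂ) (stolz x α)) (nhds l)

open ComplexConjugate

/-- `cayley q` maps `ℂ⁺` onto the unit disc, sending `q` to `0`; `cayleyInv q` is its inverse. -/
def cayley (q z : ℂ) : ℂ := (z - q) / (z - conj q)

def cayleyInv (q ζ : ℂ) : ℂ := (q - ζ * conj q) / (1 - ζ)

lemma normSq_sub_conj (z a : ℂ) : normSq (z - conj a) = normSq (z - a) + 4 * z.im * a.im := by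
  simp only [normSq_apply, sub_re, sub_im, conj_re, conj_im]
  ring

lemma sub_conj_ne_zero {z a : ℂ} (hz : z ∈ UHP) (ha : a ∈ UHP) : z - conj a ≠ 0 := by
  intro h
  have him := congrArg im h
  simp only [sub_im, conj_im, sub_neg_eq_add, zero_im] at him
  linarith [show 0 < z.im from hz, show 0 < a.im from ha]

lemma normSq_cayley {q z : ℂ} (h : z - conj q ≠ 0) :
    normSq (cayley q z) = 1 - 4 * (z.im * q.im / normSq (z - conj q)) := by
  have hpos := normSq_pos.2 h
  rw [cayley, normSq_div]
  field_simp
  linarith [normSq_sub_conj z q]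

lemma norm_cayley_lt_one {q z : ℂ} (hq : q ∈ UHP) (hz : z ∈ UHP) : ‖cayley q z‖ < 1 := by
  have h := sub_conj_ne_zero hz hq
  have hpos : 0 < z.im * q.im / normSq (z - conj q) :=
    div_pos (mul_pos hz hq) (normSq_pos.2 h)
  rw [← sq_lt_one_iff₀ (norm_nonneg _), Complex.sq_norm, normSq_cayley h]
  linarith

lemma cayley_self (q : ℂ) : cayley q q = 0 := by simp [cayley]

lemma im_cayleyInv (q ζ : ℂ) :
    (cayleyInv q ζ).im = q.im * (1 - normSq ζ) / normSq (1 - ζ) := by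
  simp only [cayleyInv, div_im, normSq_apply, sub_re, sub_im, mul_re, mul_im, conj_re, conj_im,
    one_re, one_im]
  ring

lemma cayleyInv_mem_UHP {q ζ : ℂ} (hq : q ∈ UHP) (hζ : ‖ζ‖ < 1) : cayleyInv q ζ ∈ UHP := by
  have hζ1 : 1 - ζ ≠ 0 := by
    rw [sub_ne_zero]
    rintro rfl
    simp at hζ
  have hζsq : normSq ζ < 1 := by rwa [← Complex.sq_norm, sq_lt_one_iff₀ (norm_nonneg _)]
  show 0 < (cayleyInv q ζ).im
  rw [im_cayleyInv]
  exact div_pos (mul_pos hq (sub_pos.2 hζsq)) (normSq_pos.2 hζ1)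

lemma cayleyInv_zero (q : ℂ) : cayleyInv q 0 = q := by simp [cayleyInv]

lemma cayleyInv_cayley {q z : ℂ} (hq : q ∈ UHP) (hz : z ∈ UHP) : cayleyInv q (cayley q z) = z := by
  have h1 := sub_conj_ne_zero hz hq
  have h2 := sub_conj_ne_zero hq hq
  have h3 : 1 - cayley q z = (q - conj q) / (z - conj q) := by
    rw [cayley]; field_simp; ring
  rw [cayleyInv, h3, div_eq_iff (div_ne_zero h2 h1), cayley]
  field_simp
  ring

lemma differentiableOn_cayley {q : ℂ} (hq : q ∈ UHP) : DifferentiableOn ℂ (cayley q) UHP :=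
  ((differentiableOn_id.sub_const q).div (differentiableOn_id.sub_const _))
    fun _ hz => sub_conj_ne_zero hz hq

lemma differentiableOn_cayleyInv (q : ℂ) : DifferentiableOn ℂ (cayleyInv q) (Metric.ball 0 1) := by
  refine ((differentiableOn_const q).sub (differentiableOn_id.mul_const _)).div
    (differentiableOn_const 1 |>.sub differentiableOn_id) fun ζ hζ h => ?_
  rw [sub_eq_zero] at h
  simp [← h] at hζ

theorem norm_cayley_le_of_mapsTo {f : ℂ → ℂ} (hd : DifferentiableOn ℂ f UHP)
    (hf : MapsTo f UHP UHP) {p q : ℂ} (hp : p ∈ UHP) (hq : q ∈ UHP) :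
    ‖cayley (f q) (f p)‖ ≤ ‖cayley q p‖ := by
  have hinv : MapsTo (cayleyInv q) (Metric.ball 0 1) UHP := fun ζ hζ =>
    cayleyInv_mem_UHP hq (mem_ball_zero_iff.1 hζ)
  have hd' : DifferentiableOn ℂ (cayley (f q) ∘ f ∘ cayleyInv q) (Metric.ball 0 1) :=
    (differentiableOn_cayley (hf hq)).comp (hd.comp (differentiableOn_cayleyInv q) hinv)
      (hf.comp hinv)
  have hmaps : MapsTo (cayley (f q) ∘ f ∘ cayleyInv q) (Metric.ball 0 1) (Metric.closedBall 0 1) :=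
    fun ζ hζ => mem_closedBall_zero_iff.2 (norm_cayley_lt_one (hf hq) (hf (hinv hζ))).le
  have h0 : (cayley (f q) ∘ f ∘ cayleyInv q) 0 = 0 := by
    simp [cayleyInv_zero, cayley_self]
  simpa [cayleyInv_cayley hq hp] using
    Complex.norm_le_norm_of_mapsTo_ball hd' hmaps h0 (norm_cayley_lt_one hq hp)

theorem im_mul_im_mul_normSq_sub_conj_le_of_mapsTo {f : ℂ → ℂ} (hd : DifferentiableOn ℂ f UHP)
    (hf : MapsTo f UHP UHP) {p q : ℂ} (hp : p ∈ UHP) (hq : q ∈ UHP) :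
    p.im * q.im * normSq (f p - conj (f q)) ≤ (f p).im * (f q).im * normSq (p - conj q) := by
  have hpq := sub_conj_ne_zero hp hq
  have hfpq := sub_conj_ne_zero (hf hp) (hf hq)
  have h := pow_le_pow_left₀ (norm_nonneg _) (norm_cayley_le_of_mapsTo hd hf hp hq) 2
  rw [Complex.sq_norm, Complex.sq_norm, normSq_cayley hfpq, normSq_cayley hpq] at h
  have h' : p.im * q.im / normSq (p - conj q) ≤
      (f p).im * (f q).im / normSq (f p - conj (f q)) := by
    linarith
  rwa [div_le_div_iff₀ (normSq_pos.2 hpq) (normSq_pos.2 hfpq)] at h'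

theorem im_mul_im_mul_normSq_sub_conj_le {f : ℂ → ℂ} (hd : DifferentiableOn ℂ f UHP)
    (hf : ∀ w ∈ UHP, 0 ≤ (f w).im) {p q : ℂ} (hp : p ∈ UHP) (hq : q ∈ UHP) :
    p.im * q.im * normSq (f p - conj (f q)) ≤ (f p).im * (f q).im * normSq (p - conj q) := by
  have hshift : ∀ ε : ℝ, 0 < ε → p.im * q.im * normSq (f p + ε * I - conj (f q + ε * I)) ≤
      (f p + ε * I).im * (f q + ε * I).im * normSq (p - conj q) := fun ε hε =>
    im_mul_im_mul_normSq_sub_conj_le_of_mapsTo (f := fun w => f w + ε * I) (hd.add_const _)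
      (fun w hw => by simpa [UHP] using add_pos_of_nonneg_of_pos (hf w hw) hε) hp hq
  have hlim {g : ℝ → ℝ} (hg : Continuous g) : Tendsto g (𝓝[>] 0) (𝓝 (g 0)) :=
    hg.continuousWithinAt
  simpa using le_of_tendsto_of_tendsto (hlim (by fun_prop)) (hlim (by fun_prop))
    (eventually_nhdsWithin_of_forall hshift)

lemma sub_ofReal_ne_zero {z : ℂ} (hz : z ∈ UHP) (t : ℝ) : z - t ≠ 0 := by
  intro h
  have him := congrArg im h
  simp only [sub_im, ofReal_im, sub_zero, zero_im] at him
  exact (ne_of_gt hz) him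

lemma integrable_inv_sub_ofReal (μ : Measure ℝ) [IsFiniteMeasure μ] {z : ℂ} (hz : z ∈ UHP) :
    Integrable (fun t : ℝ => (z - t)⁻¹) μ := by
  refine Integrable.mono' (integrable_const z.im⁻¹) ?_ (Eventually.of_forall fun t => ?_)
  · exact ((continuous_const.sub continuous_ofReal).inv₀
      (sub_ofReal_ne_zero hz)).aestronglyMeasurable
  · rw [norm_inv]
    refine inv_anti₀ hz ?_
    simpa [abs_of_pos (show 0 < z.im from hz)] using abs_im_le_norm (z - t)

lemma im_cauchyG_neg (μ : Measure ℝ) [IsFiniteMeasure μ] [NeZero μ] {z : ℂ} (hz : z ∈ UHP) :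
    (cauchyG μ z).im < 0 := by
  have hpos (t : ℝ) : 0 < z.im / normSq (z - t) :=
    div_pos hz (normSq_pos.2 (sub_ofReal_ne_zero hz t))
  have him : (cauchyG μ z).im = -∫ t, z.im / normSq (z - t) ∂μ := by
    rw [cauchyG, ← integral_neg]
    refine (imCLM.integral_comp_comm (integrable_inv_sub_ofReal μ hz)).symm.trans ?_
    simp [inv_im, neg_div]
  have hint : Integrable (fun t : ℝ => z.im / normSq (z - t)) μ :=
    (integrable_inv_sub_ofReal μ hz).im.neg.congr (Eventually.of_forall fun t => by simp [neg_div])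
  rw [him, neg_lt_zero, integral_pos_iff_support_of_nonneg (fun t => (hpos t).le) hint,
    Function.support_eq_univ (fun t => (hpos t).ne')]
  simp [NeZero.ne μ]

lemma cauchyF_mem_UHP (μ : Measure ℝ) [IsFiniteMeasure μ] [NeZero μ] {z : ℂ} (hz : z ∈ UHP) :
    cauchyF μ z ∈ UHP := by
  have h := im_cauchyG_neg μ hz
  have hne : cauchyG μ z ≠ 0 := fun h0 => by simp [h0] at h
  show 0 < (cauchyF μ z).im
  rw [cauchyF, inv_im]
  exact div_pos (neg_pos.2 h) (normSq_pos.2 hne)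

theorem im_mul_normSq_sub_le_of_tendsto {α : Type*} {l : Filter α} [l.NeBot] {f : ℂ → ℂ}
    (hd : DifferentiableOn ℂ f UHP) (hf : ∀ w ∈ UHP, 0 ≤ (f w).im) {w : α → ℂ} {c L : ℝ}
    (hwU : ∀ᶠ a in l, w a ∈ UHP) (hfw : ∀ᶠ a in l, (f (w a)).im ≤ (w a).im)
    (hwc : Tendsto w l (𝓝 c)) (hfL : Tendsto (f ∘ w) l (𝓝 L)) :
    ∀ p ∈ UHP, p.im * normSq (f p - L) ≤ (f p).im * normSq (p - c) := by
  intro p hp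
  have hle : ∀ᶠ a in l,
      p.im * normSq (f p - conj (f (w a))) ≤ (f p).im * normSq (p - conj (w a)) := by
    filter_upwards [hwU, hfw] with a ha hfa
    refine le_of_mul_le_mul_right ?_ (show 0 < (w a).im from ha)
    calc p.im * normSq (f p - conj (f (w a))) * (w a).im
        ≤ (f p).im * (f (w a)).im * normSq (p - conj (w a)) := by
          linarith [im_mul_im_mul_normSq_sub_conj_le hd hf hp ha]
      _ ≤ (f p).im * normSq (p - conj (w a)) * (w a).im := by
          nlinarith [mul_le_mul_of_nonneg_left hfa
            (mul_nonneg (hf p hp) (normSq_nonneg (p - conj (w a))))]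
  have hlim {g : α → ℂ} {u : ℂ} {r : ℝ} (hg : Tendsto g l (𝓝 r)) (k : ℝ) :
      Tendsto (fun a => k * normSq (u - conj (g a))) l (𝓝 (k * normSq (u - r))) := by
    simpa [Function.comp_def] using
      ((by fun_prop : Continuous fun v : ℂ => k * normSq (u - conj v)).tendsto r).comp hg
  exact le_of_tendsto_of_tendsto (hlim hfL p.im) (hlim hwc (f p).im) hle

lemma norm_sub_ofReal_le_of_mem_stolz {c α L : ℝ} {p v : ℂ} (hp : p ∈ stolz c α)
    (h : p.im * normSq (v - L) ≤ v.im * normSq (p - c)) : ‖v - L‖ ≤ (α ^ 2 + 1) * p.im := by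
  obtain ⟨hpim, hpre⟩ := hp
  have hdist : normSq (p - c) ≤ (α ^ 2 + 1) * p.im ^ 2 := by
    have := pow_le_pow_left₀ (abs_nonneg _) hpre 2
    rw [sq_abs] at this
    simp only [normSq_apply, sub_re, sub_im, ofReal_re, ofReal_im, sub_zero]
    nlinarith
  have him : v.im ≤ ‖v - L‖ := by
    simpa using (le_abs_self _).trans (abs_im_le_norm (v - L))
  have hsq : p.im * ‖v - L‖ ^ 2 ≤ p.im * (‖v - L‖ * ((α ^ 2 + 1) * p.im)) := by
    rw [Complex.sq_norm]
    calc p.im * normSq (v - L) ≤ v.im * normSq (p - c) := h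
      _ ≤ ‖v - L‖ * ((α ^ 2 + 1) * p.im ^ 2) :=
          mul_le_mul him hdist (normSq_nonneg _) (norm_nonneg _)
      _ = p.im * (‖v - L‖ * ((α ^ 2 + 1) * p.im)) := by ring
  rcases (norm_nonneg (v - L)).eq_or_lt with h0 | hpos
  · rw [← h0]
    positivity
  · nlinarith [le_of_mul_le_mul_left hsq hpim]

theorem hasNTLimitAt_of_im_mul_normSq_sub_le {f : ℂ → ℂ} {c L : ℝ}
    (h : ∀ p ∈ UHP, p.im * normSq (f p - L) ≤ (f p).im * normSq (p - c)) :
    HasNTLimitAt f c L := by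
  intro α _
  rw [tendsto_iff_norm_sub_tendsto_zero]
  refine squeeze_zero' (Eventually.of_forall fun _ => norm_nonneg _)
    (eventually_nhdsWithin_of_forall fun p hp => norm_sub_ofReal_le_of_mem_stolz hp (h p hp.1)) ?_
  simpa using ((by fun_prop : Continuous fun p : ℂ => (α ^ 2 + 1) * p.im).tendsto (c : ℂ)).mono_left
    nhdsWithin_le_nhds

lemma HasNTLimitAt.neg {f : ℂ → ℂ} {x : ℝ} {l : ℂ} (h : HasNTLimitAt f x l) :
    HasNTLimitAt (-f) x (-l) :=
  fun α hα => (h α hα).neg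

theorem stmt5_general (μ : Measure ℝ) [IsProbabilityMeasure μ]
    (φ : ℂ → ℂ) (hφa : AnalyticOnNhd ℂ φ UHP) (hφm : ∀ z ∈ UHP, (φ z).im ≤ 0)
    (heq : ∀ z ∈ UHP, z = cauchyF μ z + φ (cauchyF μ z))
    (Fext : ℂ → ℂ)
    (hFc : ContinuousOn Fext (UHP ∪ ((fun x : ℝ => (x : ℂ)) '' Set.univ)))
    (hFeq : ∀ z ∈ UHP, Fext z = cauchyF μ z)
    (hNT : ∀ x : ℝ, ∀ lim : ℂ, HasNTLimitAt φ x lim → lim.im < 0) :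
    ∀ x : ℝ, 0 < (Fext (x : ℂ)).im := by
  intro x
  by_contra hle
  set z : ℝ → ℂ := fun ε => x + ε * I
  have hzU : ∀ᶠ ε in 𝓝[>] 0, z ε ∈ UHP :=
    eventually_nhdsWithin_of_forall fun ε hε => by simpa [z, UHP] using hε
  have hzx : Tendsto z (𝓝[>] 0) (𝓝 x) := by
    simpa [z] using ((by fun_prop : Continuous z).tendsto 0).mono_left nhdsWithin_le_nhds
  have hFU : ∀ᶠ ε in 𝓝[>] 0, cauchyF μ (z ε) ∈ UHP := hzU.mono fun _ h => cauchyF_mem_UHP μ h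
  have hFz : Tendsto (cauchyF μ ∘ z) (𝓝[>] 0) (𝓝 (Fext x)) :=
    ((hFc x (Or.inr ⟨x, trivial, rfl⟩)).tendsto.comp
      (tendsto_nhdsWithin_iff.2 ⟨hzx, hzU.mono fun _ h => Or.inl h⟩)).congr'
      (hzU.mono fun _ h => hFeq _ h)
  obtain ⟨c, hc⟩ : ∃ c : ℝ, Fext x = c := ⟨(Fext x).re, Complex.ext rfl <| le_antisymm
    (not_lt.1 hle) (ge_of_tendsto ((continuous_im.tendsto _).comp hFz) (hFU.mono fun _ h => h.le))⟩
  rw [hc] at hFz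
  have hfF : ∀ ε, z ε ∈ UHP → (-φ) (cauchyF μ (z ε)) = cauchyF μ (z ε) - z ε := fun ε h => by
    simp only [Pi.neg_apply]
    linear_combination heq _ h
  have hfL : Tendsto ((-φ) ∘ cauchyF μ ∘ z) (𝓝[>] 0) (𝓝 ((c - x : ℝ) : ℂ)) := by
    push_cast
    exact (hFz.sub hzx).congr' (hzU.mono fun ε h => (hfF ε h).symm)
  have hbound := im_mul_normSq_sub_le_of_tendsto hφa.differentiableOn.neg
    (fun w hw => by simpa using hφm w hw) hFU
    (hzU.mono fun ε h => by rw [hfF ε h, sub_im]; linarith [show 0 < (z ε).im from h]) hFz hfL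
  simpa using hNT c (-(c - x : ℝ))
    (by simpa using (hasNTLimitAt_of_im_mul_normSq_sub_le hbound).neg)

/-- Let `μ` be a probability measure on `ℝ`, not a Dirac mass, and
`φ : ℂ⁺ → ℂ⁻ ∪ ℝ` analytic with `z = F_μ(z) + φ(F_μ(z))` on `ℂ⁺`. If `F_μ|ℂ⁺` extends
continuously to `ℝ` with finite values and every existing nontangential limit of `φ` at a
real point lies in `ℂ⁻`, then the boundary values of `F_μ` on `ℝ` lie in `ℂ⁺`. -/
theorem stmt5 (μ : Measure ℝ) [IsProbabilityMeasure μ]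
    (hnd : ∀ a : ℝ, μ ≠ Measure.dirac a)
    (φ : ℂ → ℂ) (hφa : AnalyticOnNhd ℂ φ UHP) (hφm : ∀ z ∈ UHP, (φ z).im ≤ 0)
    (heq : ∀ z ∈ UHP, z = cauchyF μ z + φ (cauchyF μ z))
    (Fext : ℂ → ℂ)
    (hFc : ContinuousOn Fext (UHP ∪ ((fun x : ℝ => (x : ℂ)) '' Set.univ)))
    (hFeq : ∀ z ∈ UHP, Fext z = cauchyF μ z)
    (hNT : ∀ x : ℝ, ∀ lim : ℂ, HasNTLimitAt φ x lim → lim.im < 0) :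
    ∀ x : ℝ, 0 < (Fext (x : ℂ)).im :=
  stmt5_general μ φ hφa hφm heq Fext hFc hFeq hNT
end
end

section
/- Let λ ∈ (0,1) and let μ be a symmetric Borel probability measure on ℝ that is ⊞_λ-infinitely divisible with rectangular R-transform C arising from a symmetric positive finite Borel measure G. Then the limit L = lim_{w→−∞} C(w) exists in [−∞, 0]; μ({0}) > 0 if and only if L ∈ (−1, 0]; and in that case μ({0}) = 1 + L. -/
open MeasureTheory Complex Set Filter Topology

noncomputable section

/-- `T(w) = (λ w + 1)(w + 1)`. -/
def Tfun (l : ℝ) (w : ℂ) : ℂ := ((l : ℂ) * w + 1) * (w + 1)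

/-- The rectangular `R`-transform with Lévy measure `G`:
`C(z) = z ∫ (1+t²)/(1-z t²) dG(t)`. -/
def rectC (G : Measure ℝ) (z : ℂ) : ℂ :=
  z * ∫ t : ℝ, (1 + (t : ℂ) ^ 2) / (1 - z * (t : ℂ) ^ 2) ∂G

/-- `μ` is `⊞_λ`-infinitely divisible with rectangular `R`-transform `C = rectC G`:
`H_μ(x) = x T(C(H_μ(x)))` for `x < 0` close to `0`. -/
def IsRectInfDiv (l : ℝ) (μ G : Measure ℝ) : Prop :=
  ∃ ε > (0 : ℝ), ∀ x ∈ Set.Ioo (-ε) (0 : ℝ),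
    Ht l μ (x : ℂ) = (x : ℂ) * Tfun l (rectC G (Ht l μ (x : ℂ)))

/-- `ρ` is the rectangular free convolution `μ ⊞_λ ν`, where `μ` has rectangular
`R`-transform `rectC G`. -/
def IsRectConv (l : ℝ) (G ν ρ : Measure ℝ) : Prop :=
  ∃ ε > (0 : ℝ), ∀ x ∈ Set.Ioo (-ε) (0 : ℝ),
    Tfun l (Mt ρ (x : ℂ) - rectC G (Ht l ρ (x : ℂ))) ≠ 0 ∧
    Ht l ρ (x : ℂ) =
      Ht l ν (Ht l ρ (x : ℂ) / Tfun l (Mt ρ (x : ℂ) - rectC G (Ht l ρ (x : ℂ))))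

lemma norm_one_sub_mul_sq_ge {z : ℂ} {a : ℝ} (hz : z.re ≤ -a) (t : ℝ) :
    1 + a * t ^ 2 ≤ ‖1 - z * (t : ℂ) ^ 2‖ := by
  have hre : (1 - z * (t : ℂ) ^ 2).re = 1 - z.re * t ^ 2 := by
    rw [← Complex.ofReal_pow, Complex.sub_re, Complex.re_mul_ofReal, Complex.one_re]
  nlinarith [Complex.re_le_norm (1 - z * (t : ℂ) ^ 2), sq_nonneg t]

section LeftHalfPlaneBounds

variable {z c : ℂ} {a t : ℝ}

lemma norm_one_sub_mul_sq_pos (ha : 0 < a) (hz : z.re ≤ -a) : 0 < ‖1 - z * (t : ℂ) ^ 2‖ :=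
  (by positivity : (0 : ℝ) < 1 + a * t ^ 2).trans_le (norm_one_sub_mul_sq_ge hz t)

lemma norm_div_one_sub_mul_sq_le (ha : 0 < a) (hz : z.re ≤ -a) (hc : ‖c‖ ≤ 1 + t ^ 2) :
    ‖c / (1 - z * (t : ℂ) ^ 2)‖ ≤ 1 + 1 / a := by
  rw [norm_div, div_le_iff₀ (norm_one_sub_mul_sq_pos ha hz)]
  have : 1 + t ^ 2 ≤ (1 + 1 / a) * (1 + a * t ^ 2) := by
    field_simp; nlinarith [mul_nonneg (sq_nonneg t) (sq_nonneg a)]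
  nlinarith [norm_one_sub_mul_sq_ge hz t, (by positivity : (0 : ℝ) ≤ 1 + 1 / a)]

lemma norm_mul_sq_div_one_sub_mul_sq_sq_le (ha : 0 < a) (hz : z.re ≤ -a)
    (hc : ‖c‖ ≤ 1 + t ^ 2) :
    ‖c * (t : ℂ) ^ 2 / (1 - z * (t : ℂ) ^ 2) ^ 2‖ ≤ (1 + 1 / a) * (1 / a) := by
  have hsq : t ^ 2 / ‖1 - z * (t : ℂ) ^ 2‖ ≤ 1 / a := by
    rw [div_le_iff₀ (norm_one_sub_mul_sq_pos ha hz)]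
    have : t ^ 2 ≤ 1 / a * (1 + a * t ^ 2) := by field_simp; nlinarith
    nlinarith [norm_one_sub_mul_sq_ge hz t, (by positivity : (0 : ℝ) ≤ 1 / a)]
  calc ‖c * (t : ℂ) ^ 2 / (1 - z * (t : ℂ) ^ 2) ^ 2‖
      = ‖c / (1 - z * (t : ℂ) ^ 2)‖ * (t ^ 2 / ‖1 - z * (t : ℂ) ^ 2‖) := by
        rw [norm_div, norm_div, norm_mul, norm_pow, norm_pow, Complex.norm_real,
          Real.norm_eq_abs, sq_abs]
        ring
    _ ≤ (1 + 1 / a) * (1 / a) :=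
        mul_le_mul (norm_div_one_sub_mul_sq_le ha hz hc) hsq (by positivity) (by positivity)

end LeftHalfPlaneBounds

lemma hasDerivAt_div_one_sub_mul_sq (c : ℂ) (t : ℝ) {z : ℂ} (hz : 1 - z * (t : ℂ) ^ 2 ≠ 0) :
    HasDerivAt (fun w : ℂ => c / (1 - w * (t : ℂ) ^ 2))
      (c * (t : ℂ) ^ 2 / (1 - z * (t : ℂ) ^ 2) ^ 2) z := by
  have h : HasDerivAt (fun w : ℂ => 1 - w * (t : ℂ) ^ 2) (-(t : ℂ) ^ 2) z := by
    simpa using ((hasDerivAt_id' z).mul_const ((t : ℂ) ^ 2)).const_sub 1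
  exact ((hasDerivAt_const z c).div h hz).congr_deriv (by ring)

lemma differentiableOn_integral_div_one_sub_mul_sq (ν : Measure ℝ) [IsFiniteMeasure ν]
    {φ : ℝ → ℂ} (hφm : Measurable φ) (hφ : ∀ t, ‖φ t‖ ≤ 1 + t ^ 2) :
    DifferentiableOn ℂ (fun z => ∫ t, φ t / (1 - z * (t : ℂ) ^ 2) ∂ν) {z | z.re < 0} := by
  intro z₀ (hz₀ : z₀.re < 0)
  set a : ℝ := -z₀.re / 2
  have ha : 0 < a := by simp only [a]; linarith
  have hball : ∀ z ∈ Metric.ball z₀ a, z.re ≤ -a := fun z hz => by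
    have := (abs_le.mp ((Complex.abs_re_le_norm (z - z₀)).trans (mem_ball_iff_norm.mp hz).le)).2
    simp only [Complex.sub_re, a] at this ⊢
    linarith
  have hmeas : ∀ z : ℂ, Measurable fun t : ℝ => 1 - z * (t : ℂ) ^ 2 := fun z => by fun_prop
  have key := hasDerivAt_integral_of_dominated_loc_of_deriv_le (μ := ν) (x₀ := z₀)
    (bound := fun _ => (1 + 1 / a) * (1 / a)) (Metric.ball_mem_nhds z₀ ha)
    (.of_forall fun z => (hφm.div (hmeas z)).aestronglyMeasurable)
    ((integrable_const (1 + 1 / a)).mono' (hφm.div (hmeas z₀)).aestronglyMeasurable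
      (.of_forall fun t => norm_div_one_sub_mul_sq_le ha (hball z₀ (Metric.mem_ball_self ha))
        (hφ t)))
    ((hφm.mul (by fun_prop)).div ((hmeas z₀).pow_const 2)).aestronglyMeasurable
    (.of_forall fun t z hz => norm_mul_sq_div_one_sub_mul_sq_sq_le ha (hball z hz) (hφ t))
    (integrable_const _)
    (.of_forall fun t z hz => hasDerivAt_div_one_sub_mul_sq (φ t) t
      (norm_pos_iff.mp (norm_one_sub_mul_sq_pos ha (hball z hz))))
  exact key.2.differentiableAt.differentiableWithinAt

lemma AnalyticAt.comp_ofReal {f : ℂ → ℂ} {x : ℝ} (hf : AnalyticAt ℂ f x) :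
    AnalyticAt ℝ (fun y : ℝ => f y) x :=
  (hf.restrictScalars (𝕜 := ℝ)).comp (Complex.ofRealCLM.analyticAt x)

lemma norm_sq_le_one_add_sq (t : ℝ) : ‖(t : ℂ) ^ 2‖ ≤ 1 + t ^ 2 := by
  rw [norm_pow, Complex.norm_real, Real.norm_eq_abs, sq_abs]
  linarith

lemma analyticOnNhd_Mt (μ : Measure ℝ) [IsFiniteMeasure μ] :
    AnalyticOnNhd ℂ (Mt μ) {z | z.re < 0} := by
  have h : Mt μ = fun z => z * ∫ t : ℝ, (t : ℂ) ^ 2 / (1 - z * (t : ℂ) ^ 2) ∂μ := by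
    funext z
    rw [Mt, ← integral_const_mul]
    simp_rw [mul_div_assoc]
  rw [h]
  exact analyticOnNhd_id.mul ((differentiableOn_integral_div_one_sub_mul_sq μ (by fun_prop)
    norm_sq_le_one_add_sq).analyticOnNhd (isOpen_lt continuous_re continuous_const))

lemma analyticOnNhd_rectC (G : Measure ℝ) [IsFiniteMeasure G] :
    AnalyticOnNhd ℂ (rectC G) {z | z.re < 0} :=
  analyticOnNhd_id.mul ((differentiableOn_integral_div_one_sub_mul_sq G (by fun_prop)
    fun t => (norm_add_le _ _).trans (by simp)).analyticOnNhd
      (isOpen_lt continuous_re continuous_const))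

lemma analyticOnNhd_Ht (l : ℝ) (μ : Measure ℝ) [IsFiniteMeasure μ] :
    AnalyticOnNhd ℂ (Ht l μ) {z | z.re < 0} :=
  (analyticOnNhd_id.mul (analyticOnNhd_const.add (analyticOnNhd_Mt μ))).mul
    (analyticOnNhd_const.add (analyticOnNhd_const.mul (analyticOnNhd_Mt μ)))

lemma one_sub_mul_sq_pos {x : ℝ} (hx : x ≤ 0) (t : ℝ) : 0 < 1 - x * t ^ 2 := by
  nlinarith [sq_nonneg t]

lemma mul_sq_div_one_sub_mul_sq {x : ℝ} (hx : x ≤ 0) (t : ℝ) :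
    x * t ^ 2 / (1 - x * t ^ 2) = (1 - x * t ^ 2)⁻¹ - 1 := by
  field_simp [(one_sub_mul_sq_pos hx t).ne']
  ring

lemma inv_one_sub_mul_sq_le_one {x : ℝ} (hx : x ≤ 0) (t : ℝ) : (1 - x * t ^ 2)⁻¹ ≤ 1 :=
  inv_le_one_of_one_le₀ (by nlinarith [sq_nonneg t])

lemma abs_mul_sq_div_one_sub_mul_sq_le_one {x : ℝ} (hx : x ≤ 0) (t : ℝ) :
    |x * t ^ 2 / (1 - x * t ^ 2)| ≤ 1 := by
  rw [mul_sq_div_one_sub_mul_sq hx, abs_le]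
  have := inv_pos.mpr (one_sub_mul_sq_pos hx t)
  constructor <;> linarith [inv_one_sub_mul_sq_le_one hx t]

lemma abs_mul_one_add_sq_div_le {x : ℝ} (hx : x ≤ 0) (t : ℝ) :
    |x * (1 + t ^ 2) / (1 - x * t ^ 2)| ≤ 1 - x := by
  have hd := one_sub_mul_sq_pos hx t
  rw [abs_div, abs_of_pos hd, div_le_iff₀ hd, abs_of_nonpos (by nlinarith [sq_nonneg t])]
  nlinarith [sq_nonneg (x * t), sq_nonneg t]

def realMt (μ : Measure ℝ) (x : ℝ) : ℝ := ∫ t, x * t ^ 2 / (1 - x * t ^ 2) ∂μ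

def realRectC (G : Measure ℝ) (x : ℝ) : ℝ := ∫ t, x * (1 + t ^ 2) / (1 - x * t ^ 2) ∂G

def realHt (l : ℝ) (μ : Measure ℝ) (x : ℝ) : ℝ :=
  x * (1 + realMt μ x) * (1 + l * realMt μ x)

lemma Mt_ofReal (μ : Measure ℝ) (x : ℝ) : Mt μ x = realMt μ x := by
  rw [Mt, realMt, ← integral_complex_ofReal]
  push_cast
  rfl

lemma rectC_ofReal (G : Measure ℝ) (x : ℝ) : rectC G x = realRectC G x := by
  rw [rectC, realRectC, ← integral_complex_ofReal, ← integral_const_mul]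
  push_cast
  simp_rw [mul_div_assoc]

lemma Ht_ofReal (l : ℝ) (μ : Measure ℝ) (x : ℝ) : Ht l μ x = realHt l μ x := by
  simp [Ht, realHt, Mt_ofReal]

lemma Tfun_ofReal (l w : ℝ) : Tfun l w = ((l * w + 1) * (w + 1) : ℝ) := by
  simp [Tfun]

section realMt

variable (μ : Measure ℝ) {x : ℝ}

lemma integrable_mul_sq_div_one_sub_mul_sq [IsFiniteMeasure μ] (hx : x ≤ 0) :
    Integrable (fun t => x * t ^ 2 / (1 - x * t ^ 2)) μ :=
  (integrable_const 1).mono' (by fun_prop : Measurable _).aestronglyMeasurable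
    (.of_forall (abs_mul_sq_div_one_sub_mul_sq_le_one hx))

lemma realMt_nonpos (hx : x ≤ 0) : realMt μ x ≤ 0 :=
  integral_nonpos fun t => div_nonpos_of_nonpos_of_nonneg (by nlinarith [sq_nonneg t])
    (one_sub_mul_sq_pos hx t).le

lemma neg_one_lt_realMt [IsProbabilityMeasure μ] (hx : x ≤ 0) : -1 < realMt μ x := by
  have hint : Integrable (fun t => (1 - x * t ^ 2)⁻¹) μ := by
    refine ((integrable_mul_sq_div_one_sub_mul_sq μ hx).add (integrable_const 1)).congr
      (.of_forall fun t => ?_)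
    simp [mul_sq_div_one_sub_mul_sq hx]
  have hpt : ∀ t, 0 < (1 - x * t ^ 2)⁻¹ := fun t => inv_pos.mpr (one_sub_mul_sq_pos hx t)
  have hsupp : Function.support (fun t : ℝ => (1 - x * t ^ 2)⁻¹) = univ :=
    eq_univ_of_forall fun t => (hpt t).ne'
  have hpos : 0 < ∫ t, (1 - x * t ^ 2)⁻¹ ∂μ := by
    rw [integral_pos_iff_support_of_nonneg (fun t => (hpt t).le) hint, hsupp]
    simp
  have : realMt μ x = ∫ t, (1 - x * t ^ 2)⁻¹ ∂μ - 1 := by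
    simp_rw [realMt, mul_sq_div_one_sub_mul_sq hx]
    rw [integral_sub hint (integrable_const 1)]
    simp
  linarith

lemma tendsto_realMt_atBot [IsFiniteMeasure μ] :
    Tendsto (realMt μ) atBot (𝓝 (μ.real {0} - μ.real univ)) := by
  have hlim : ∫ t, (({0} : Set ℝ).indicator 1 t - 1) ∂μ = μ.real {0} - μ.real univ := by
    rw [integral_sub ((integrable_const 1).indicator (measurableSet_singleton 0))
      (integrable_const 1), integral_indicator_one (measurableSet_singleton 0)]
    simp
  rw [← hlim]
  refine tendsto_integral_filter_of_dominated_convergence (fun _ => 1)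
    (.of_forall fun x => (by fun_prop : Measurable _).aestronglyMeasurable) ?_
    (integrable_const 1) (.of_forall fun t => ?_)
  · filter_upwards [eventually_le_atBot 0] with x hx
    exact .of_forall (abs_mul_sq_div_one_sub_mul_sq_le_one hx)
  rcases eq_or_ne t 0 with rfl | ht
  · simp
  have hinv : Tendsto (fun x : ℝ => (1 - x * t ^ 2)⁻¹ - 1) atBot (𝓝 (0 - 1)) := by
    refine (tendsto_inv_atTop_zero.comp ?_).sub_const 1
    exact tendsto_atTop_add_const_left _ 1
      (tendsto_neg_atBot_atTop.comp (tendsto_id.atBot_mul_const (by positivity)))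
  simp only [zero_sub] at hinv
  simpa [ht] using hinv.congr' ((eventually_le_atBot 0).mono
    fun x hx => (mul_sq_div_one_sub_mul_sq hx t).symm)

end realMt

section realRectC

variable (G : Measure ℝ) [IsFiniteMeasure G]

lemma integrable_mul_one_add_sq_div_one_sub_mul_sq {x : ℝ} (hx : x ≤ 0) :
    Integrable (fun t => x * (1 + t ^ 2) / (1 - x * t ^ 2)) G :=
  (integrable_const (1 - x)).mono' (by fun_prop : Measurable _).aestronglyMeasurable
    (.of_forall (abs_mul_one_add_sq_div_le hx))

lemma monotoneOn_realRectC : MonotoneOn (realRectC G) (Iic 0) := by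
  intro x hx y hy hxy
  refine integral_mono (integrable_mul_one_add_sq_div_one_sub_mul_sq G (hxy.trans hy))
    (integrable_mul_one_add_sq_div_one_sub_mul_sq G hy) fun t => ?_
  rw [div_le_div_iff₀ (one_sub_mul_sq_pos hx t) (one_sub_mul_sq_pos hy t)]
  nlinarith [mul_nonneg (by positivity : (0 : ℝ) ≤ 1 + t ^ 2) (sub_nonneg.mpr hxy)]

lemma tendsto_realRectC_nhdsLE_zero : Tendsto (realRectC G) (𝓝[≤] 0) (𝓝 0) := by
  have hpt : ∀ t : ℝ, Tendsto (fun x : ℝ => x * (1 + t ^ 2) / (1 - x * t ^ 2)) (𝓝[≤] 0) (𝓝 0) :=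
    fun t => tendsto_nhdsWithin_of_tendsto_nhds <| by
      have : ContinuousAt (fun x : ℝ => x * (1 + t ^ 2) / (1 - x * t ^ 2)) 0 :=
        ContinuousAt.div (by fun_prop) (by fun_prop) (by simp)
      simpa using this.tendsto
  show Tendsto (fun x => ∫ t, x * (1 + t ^ 2) / (1 - x * t ^ 2) ∂G) _ _
  simpa using tendsto_integral_filter_of_dominated_convergence (fun _ => 2)
    (.of_forall fun x => (by fun_prop : Measurable _).aestronglyMeasurable)
    (by filter_upwards [Icc_mem_nhdsLE (show (-1 : ℝ) < 0 by norm_num)] with x hx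
        exact .of_forall fun t => (abs_mul_one_add_sq_div_le hx.2 t).trans (by linarith [hx.1]))
    (integrable_const 2) (.of_forall hpt) (μ := G)

end realRectC

lemma realHt_eq_mul (l : ℝ) (μ : Measure ℝ) (x : ℝ) :
    realHt l μ x = x * ((1 + realMt μ x) * (1 + l * realMt μ x)) := by
  rw [realHt]; ring

section realHt

variable {l : ℝ} (μ : Measure ℝ) [IsProbabilityMeasure μ] {x : ℝ}

lemma one_add_realMt_mul_mem_Ioc (hl₀ : 0 ≤ l) (hl₁ : l ≤ 1) (hx : x ≤ 0) :
    (1 + realMt μ x) * (1 + l * realMt μ x) ∈ Ioc 0 1 := by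
  have h₁ := neg_one_lt_realMt μ hx
  have h₂ := realMt_nonpos μ hx
  exact ⟨mul_pos (by linarith) (by nlinarith), mul_le_one₀ (by linarith) (by nlinarith)
    (by nlinarith)⟩

lemma realHt_neg (hl₀ : 0 ≤ l) (hl₁ : l ≤ 1) (hx : x < 0) : realHt l μ x < 0 := by
  rw [realHt_eq_mul]
  exact mul_neg_of_neg_of_pos hx (one_add_realMt_mul_mem_Ioc μ hl₀ hl₁ hx.le).1

lemma le_realHt (hl₀ : 0 ≤ l) (hl₁ : l ≤ 1) (hx : x ≤ 0) : x ≤ realHt l μ x := by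
  rw [realHt_eq_mul]
  nlinarith [(one_add_realMt_mul_mem_Ioc μ hl₀ hl₁ hx).2]

lemma tendsto_realHt_nhdsLT (hl₀ : 0 ≤ l) (hl₁ : l ≤ 1) :
    Tendsto (realHt l μ) (𝓝[<] 0) (𝓝[<] 0) := by
  refine tendsto_nhdsWithin_iff.mpr ⟨?_, ?_⟩
  · refine tendsto_of_tendsto_of_tendsto_of_le_of_le' (tendsto_nhdsWithin_of_tendsto_nhds
      tendsto_id) tendsto_const_nhds ?_ ?_ <;>
      filter_upwards [self_mem_nhdsWithin] with x (hx : x < 0)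
    · exact le_realHt μ hl₀ hl₁ hx.le
    · exact (realHt_neg μ hl₀ hl₁ hx).le
  · filter_upwards [self_mem_nhdsWithin] with x (hx : x < 0)
    exact realHt_neg μ hl₀ hl₁ hx

lemma tendsto_realHt_atBot (hl₁ : l ≤ 1) (h₀ : μ {0} ≠ 0) :
    Tendsto (realHt l μ) atBot atBot := by
  have hM := tendsto_realMt_atBot μ
  rw [probReal_univ] at hM
  have hpos : 0 < μ.real {0} := ENNReal.toReal_pos h₀ (measure_ne_top μ _)
  have hle : μ.real {0} ≤ 1 := measureReal_le_one
  have hC : 0 < (1 + (μ.real {0} - 1)) * (1 + l * (μ.real {0} - 1)) := by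
    refine mul_pos (by linarith) ?_
    nlinarith [mul_nonneg (sub_nonneg.mpr hl₁) (sub_nonneg.mpr hle)]
  exact (tendsto_id.atBot_mul_pos hC ((tendsto_const_nhds.add hM).mul
    (tendsto_const_nhds.add (tendsto_const_nhds.mul hM)))).congr
    fun x => (realHt_eq_mul l μ x).symm

end realHt

lemma mul_add_one_mul_add_one_injOn {l : ℝ} (hl₀ : 0 ≤ l) (hl₁ : l ≤ 1) :
    InjOn (fun w : ℝ => (l * w + 1) * (w + 1)) (Ioi (-1)) := by
  intro a (ha : -1 < a) b (hb : -1 < b) h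
  have hfac : (a - b) * (l * (a + 1) + l * (b + 1) + (1 - l)) = 0 := by
    simp only at h; linear_combination h
  have : 0 < l * (a + 1) + l * (b + 1) + (1 - l) := by
    rcases hl₀.eq_or_lt with rfl | hl
    · norm_num
    · nlinarith [mul_pos hl (neg_lt_iff_pos_add.mp ha)]
  linarith [(mul_eq_zero.mp hfac).resolve_right this.ne']

lemma MonotoneOn.exists_tendsto_atBot_ereal {f : ℝ → ℝ} {a : ℝ} (hf : MonotoneOn f (Iic a)) :
    ∃ L : EReal, Tendsto (fun x => (f x : EReal)) atBot (𝓝 L) ∧ ∀ x ≤ a, L ≤ f x := by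
  set g : ℝ → EReal := fun x => f (min x a)
  have hg : Monotone g := fun x y hxy => EReal.coe_le_coe_iff.mpr
    (hf (min_le_right x a) (min_le_right y a) (min_le_min_right a hxy))
  refine ⟨⨅ x, g x, (tendsto_atBot_iInf hg).congr' ?_, fun x hx => ?_⟩
  · filter_upwards [eventually_le_atBot a] with x hx
    simp [g, min_eq_left hx]
  · simpa [g, min_eq_left hx] using iInf_le g x

namespace IsRectInfDiv

variable {l : ℝ} {μ G : Measure ℝ} [IsProbabilityMeasure μ] [IsFiniteMeasure G]

lemma eventually_realRectC_realHt_eq (hl₀ : 0 ≤ l) (hl₁ : l ≤ 1) (hID : IsRectInfDiv l μ G) :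
    ∀ᶠ x in 𝓝[<] 0, realRectC G (realHt l μ x) = realMt μ x := by
  obtain ⟨ε, hε, hεID⟩ := hID
  have hsmall : ∀ᶠ x in 𝓝[<] 0, -1 < realRectC G (realHt l μ x) :=
    ((tendsto_realRectC_nhdsLE_zero G).comp ((tendsto_realHt_nhdsLT μ hl₀ hl₁).mono_right
      (nhdsWithin_mono _ Iio_subset_Iic_self))).eventually (lt_mem_nhds (by norm_num))
  filter_upwards [Ioo_mem_nhdsLT (neg_lt_zero.mpr hε), hsmall] with x hx hCx
  have h := hεID x hx
  rw [Ht_ofReal, rectC_ofReal, Tfun_ofReal] at h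
  set C := realRectC G (realHt l μ x)
  have h' : realHt l μ x = x * ((l * C + 1) * (C + 1)) := by exact_mod_cast h
  rw [realHt_eq_mul l μ x] at h'
  refine mul_add_one_mul_add_one_injOn hl₀ hl₁ hCx (neg_one_lt_realMt μ hx.2.le) ?_
  simp only
  linear_combination (mul_left_cancel₀ hx.2.ne h').symm

lemma realRectC_realHt_eq (hl₀ : 0 ≤ l) (hl₁ : l ≤ 1) (hID : IsRectInfDiv l μ G) {x : ℝ}
    (hx : x < 0) : realRectC G (realHt l μ x) = realMt μ x := by
  have hU : ∀ y : ℝ, y < 0 → (y : ℂ) ∈ {z : ℂ | z.re < 0} := fun y hy => by simpa using hy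
  have hCH : AnalyticOnNhd ℝ (fun y : ℝ => rectC G (Ht l μ y)) (Iio 0) := fun y hy =>
    (analyticOnNhd_rectC G _ (by rw [Ht_ofReal]; exact hU _ (realHt_neg μ hl₀ hl₁ hy))
      ).restrictScalars.comp (analyticOnNhd_Ht l μ _ (hU y hy)).comp_ofReal
  have hM : AnalyticOnNhd ℝ (fun y : ℝ => Mt μ y) (Iio 0) := fun y hy =>
    (analyticOnNhd_Mt μ _ (hU y hy)).comp_ofReal
  obtain ⟨a, ha, hsub⟩ :=
    mem_nhdsLT_iff_exists_Ioo_subset.mp (hID.eventually_realRectC_realHt_eq hl₀ hl₁)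
  have ha' : a < a / 2 := by linarith [mem_Iio.mp ha]
  have hEq := hCH.eqOn_of_preconnected_of_eventuallyEq hM isPreconnected_Iio
    (by linarith [mem_Iio.mp ha] : a / 2 < 0) (by
      filter_upwards [Ioo_mem_nhds ha' (by linarith [mem_Iio.mp ha] : a / 2 < 0)] with y hy
      rw [Ht_ofReal, rectC_ofReal, Mt_ofReal, hsub hy])
  simpa [Ht_ofReal, rectC_ofReal, Mt_ofReal] using hEq hx

end IsRectInfDiv

theorem stmt11_general (l : ℝ) (hl : l ∈ Set.Ioo (0 : ℝ) 1)
    (μ : Measure ℝ) [IsProbabilityMeasure μ]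
    (G : Measure ℝ) [IsFiniteMeasure G]
    (hID : IsRectInfDiv l μ G) :
    ∃ L : EReal,
      Tendsto (fun x : ℝ => ((rectC G (x : ℂ)).re : EReal)) atBot (nhds L) ∧
      L ≤ 0 ∧
      (0 < μ ({0} : Set ℝ) ↔ (-1 : EReal) < L) ∧
      ((-1 : EReal) < L → ∃ Lr : ℝ, L = (Lr : EReal) ∧ (μ ({0} : Set ℝ)).toReal = 1 + Lr) := by
  obtain ⟨L, hL, hL_le⟩ := (monotoneOn_realRectC G).exists_tendsto_atBot_ereal
  have hCH : ∀ x < 0, realRectC G (realHt l μ x) = realMt μ x :=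
    fun x hx => hID.realRectC_realHt_eq hl.1.le hl.2.le hx
  have hM : Tendsto (fun x => (realMt μ x : EReal)) atBot (𝓝 ((μ.real {0} - 1 : ℝ) : EReal)) := by
    have := tendsto_realMt_atBot μ
    rw [probReal_univ] at this
    exact (continuous_coe_real_ereal.tendsto _).comp this
  have hL_le_atom : L ≤ (μ.real {0} - 1 : ℝ) := by
    refine ge_of_tendsto hM ?_
    filter_upwards [eventually_lt_atBot 0] with x hx
    exact (hCH x hx) ▸ hL_le _ (realHt_neg μ hl.1.le hl.2.le hx).le
  have hL_eq : μ {0} ≠ 0 → L = (μ.real {0} - 1 : ℝ) := fun h₀ => by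
    refine tendsto_nhds_unique ((hL.comp (tendsto_realHt_atBot μ hl.2.le h₀)).congr' ?_) hM
    filter_upwards [eventually_lt_atBot 0] with x hx
    simp [hCH x hx]
  have h_atom : (-1 : EReal) < L → μ {0} ≠ 0 := fun hL1 h₀ => by
    have := hL1.trans_le hL_le_atom
    simp [measureReal_def, h₀] at this
  refine ⟨L, by simpa [rectC_ofReal] using hL, by simpa [realRectC] using hL_le 0 le_rfl,
    ⟨fun h => ?_, fun h => pos_iff_ne_zero.mpr (h_atom h)⟩,
    fun h => ⟨_, hL_eq (h_atom h), by simp [measureReal_def]⟩⟩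
  rw [hL_eq h.ne']
  have : 0 < μ.real {0} := ENNReal.toReal_pos h.ne' (measure_ne_top μ _)
  exact EReal.coe_lt_coe_iff.mpr (by linarith : (-1 : ℝ) < μ.real {0} - 1)

/-- If `μ` is `⊞_λ`-infinitely divisible with rectangular `R`-transform
`C = rectC G`, then `L = lim_{w→-∞} C(w)` exists in `[-∞,0]`, `μ({0}) > 0` iff
`L ∈ (-1,0]`, and in that case `μ({0}) = 1 + L`. -/
theorem stmt11 (l : ℝ) (hl : l ∈ Set.Ioo (0 : ℝ) 1)
    (μ : Measure ℝ) [IsProbabilityMeasure μ]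
    (hμsym : Measure.map (fun t : ℝ => -t) μ = μ)
    (G : Measure ℝ) [IsFiniteMeasure G]
    (hGsym : Measure.map (fun t : ℝ => -t) G = G)
    (hID : IsRectInfDiv l μ G) :
    ∃ L : EReal,
      Tendsto (fun x : ℝ => ((rectC G (x : ℂ)).re : EReal)) atBot (nhds L) ∧
      L ≤ 0 ∧
      (0 < μ ({0} : Set ℝ) ↔ (-1 : EReal) < L) ∧
      ((-1 : EReal) < L → ∃ Lr : ℝ, L = (Lr : EReal) ∧ (μ ({0} : Set ℝ)).toReal = 1 + Lr) :=
  stmt11_general l hl μ G hID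
end
end
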